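/- arXiv:2307.09140 — 3 statements merged into one kernel-verified Lean document; each statement's English description precedes it below -/
import Mathlib

section
/- The Dirichlet convolution of κ_x with σ_y equals the Dirichlet convolution of κ_y with σ_x: for all n ≥ 1, Σ_{d|n} κ_x(d)·σ_y(n/d) = Σ_{d|n} κ_y(d)·σ_x(n/d). -/
open Finset

/-- Recursive divisor function: κ_x(n) = n^x + Σ_{d|n, d<n} κ_x(d). -/
noncomputable def kappa (x : ℂ) (n : ℕ) : ℂ :=
  (n : ℂ) ^ x + ∑ d ∈ n.properDivisors.attach, kappa x d.1
termination_by n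
decreasing_by exact (Nat.mem_properDivisors.mp d.2).2

/-- Number of ordered factorizations: K(n) = ε(n) + Σ_{d|n, d<n} K(d). -/
def Kfac (n : ℕ) : ℕ :=
  (if n = 1 then 1 else 0) + ∑ d ∈ n.properDivisors.attach, Kfac d.1
termination_by n
decreasing_by exact (Nat.mem_properDivisors.mp d.2).2

/-- Divisor power sum σ_x(n) = Σ_{d|n} d^x. -/
noncomputable def sigmaC (x : ℂ) (n : ℕ) : ℂ := ∑ d ∈ n.divisors, (d : ℂ) ^ x

/-- Jordan's totient J_x = μ * id_x. -/
noncomputable def jordan (x : ℂ) (n : ℕ) : ℂ :=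
  ∑ d ∈ n.divisors, (ArithmeticFunction.moebius d : ℂ) * ((n / d : ℕ) : ℂ) ^ x

/-!
The recursion says `ζ * κ_x = 2 κ_x - id_x`, i.e. `(2 - ζ) * κ_x = id_x`, and `σ_y = id_y * ζ`.
Hence `(2 - ζ) * (κ_x * σ_y) = id_x * id_y * ζ`, which is symmetric in `x` and `y`; and `2 - ζ`
is a unit of the ring of arithmetic functions because its value at `1` is `1`.
-/

open ArithmeticFunction
open scoped ArithmeticFunction.zeta

theorem isUnit_two_sub_zeta {R : Type*} [CommRing R] :
    IsUnit (2 - (ζ : ArithmeticFunction R)) := by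
  rw [isUnit_iff_isUnit_apply_one, ← one_add_one_eq_two, sub_eq_add_neg]
  simp only [ArithmeticFunction.add_apply, ArithmeticFunction.neg_apply, one_one, natCoe_apply,
    zeta_apply, one_ne_zero, if_false, Nat.cast_one, add_neg_cancel_right, isUnit_one]

-- Arithmetic functions vanish at `0`, whereas `(0 : ℂ) ^ 0 = 1` and `kappa x 0 = 0 ^ x`.
noncomputable def cpowFn (x : ℂ) : ArithmeticFunction ℂ :=
  ⟨fun n => if n = 0 then 0 else (n : ℂ) ^ x, if_pos rfl⟩

noncomputable def kappaFn (x : ℂ) : ArithmeticFunction ℂ :=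
  ⟨fun n => if n = 0 then 0 else kappa x n, if_pos rfl⟩

noncomputable def sigmaFn (x : ℂ) : ArithmeticFunction ℂ := cpowFn x * ζ

theorem cpowFn_apply (x : ℂ) {n : ℕ} (hn : n ≠ 0) : cpowFn x n = (n : ℂ) ^ x := if_neg hn

theorem kappaFn_apply (x : ℂ) {n : ℕ} (hn : n ≠ 0) : kappaFn x n = kappa x n := if_neg hn

theorem sigmaFn_apply (x : ℂ) (n : ℕ) : sigmaFn x n = sigmaC x n := by
  rw [sigmaFn, coe_mul_zeta_apply, sigmaC]
  exact Finset.sum_congr rfl fun d hd => cpowFn_apply x (Nat.ne_of_gt (Nat.pos_of_mem_divisors hd))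

theorem sum_divisors_kappa (x : ℂ) {n : ℕ} (hn : n ≠ 0) :
    ∑ d ∈ n.divisors, kappa x d = 2 * kappa x n - (n : ℂ) ^ x := by
  rw [← Nat.cons_self_properDivisors hn, Finset.sum_cons, ← Finset.sum_attach, kappa]
  ring

theorem zeta_mul_kappaFn_add_cpowFn (x : ℂ) :
    (ζ : ArithmeticFunction ℂ) * kappaFn x + cpowFn x = kappaFn x + kappaFn x := by
  ext n
  rcases eq_or_ne n 0 with rfl | hn
  · simp
  have hsum : ∑ d ∈ n.divisors, kappaFn x d = ∑ d ∈ n.divisors, kappa x d :=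
    Finset.sum_congr rfl fun d hd => kappaFn_apply x (Nat.ne_of_gt (Nat.pos_of_mem_divisors hd))
  rw [ArithmeticFunction.add_apply, ArithmeticFunction.add_apply, coe_zeta_mul_apply, hsum,
    sum_divisors_kappa x hn, kappaFn_apply x hn, cpowFn_apply x hn]
  ring

theorem two_sub_zeta_mul_kappaFn (x : ℂ) : (2 - ζ) * kappaFn x = cpowFn x := by
  linear_combination -zeta_mul_kappaFn_add_cpowFn x

theorem kappaFn_mul_sigmaFn_comm (x y : ℂ) : kappaFn x * sigmaFn y = kappaFn y * sigmaFn x := by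
  refine isUnit_two_sub_zeta.mul_left_cancel ?_
  rw [sigmaFn, sigmaFn]
  linear_combination (cpowFn y * ζ) * two_sub_zeta_mul_kappaFn x -
    (cpowFn x * ζ) * two_sub_zeta_mul_kappaFn y

theorem kappaFn_mul_sigmaFn_apply (x y : ℂ) (n : ℕ) :
    (kappaFn x * sigmaFn y) n = ∑ d ∈ n.divisors, kappa x d * sigmaC y (n / d) := by
  rw [mul_apply, Nat.sum_divisorsAntidiagonal (fun a b => kappaFn x a * sigmaFn y b)]
  refine Finset.sum_congr rfl fun d hd => ?_
  rw [kappaFn_apply x (Nat.ne_of_gt (Nat.pos_of_mem_divisors hd)), sigmaFn_apply]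

theorem stmt2_general (x y : ℂ) (n : ℕ) :
    ∑ d ∈ n.divisors, kappa x d * sigmaC y (n / d) =
      ∑ d ∈ n.divisors, kappa y d * sigmaC x (n / d) := by
  rw [← kappaFn_mul_sigmaFn_apply, ← kappaFn_mul_sigmaFn_apply, kappaFn_mul_sigmaFn_comm]

theorem stmt2 (x y : ℂ) (n : ℕ) (hn : 1 ≤ n) :
    ∑ d ∈ n.divisors, kappa x d * sigmaC y (n / d) =
      ∑ d ∈ n.divisors, kappa y d * sigmaC x (n / d) :=
  stmt2_general x y n
end

section
/- The Dirichlet inverse of κ_0 is 2μ − ε: for all n ≥ 1, Σ_{d|n} κ_0(d)·(2μ(n/d) − ε(n/d)) = ε(n), where ε(1)=1 and ε(n)=0 otherwise. -/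
open Finset

/-! Summing the recursion `κ₀ n = 1 + ∑_{d ∣ n, d < n} κ₀ d` over all divisors counts `κ₀ n` twice,
so `κ₀ * ζ = 2κ₀ - ζ`; convolving with `μ = ζ⁻¹` gives `κ₀ = 2 κ₀ * μ - ε`. -/

open ArithmeticFunction
open scoped ArithmeticFunction.Moebius ArithmeticFunction.zeta

theorem kappa_eq_cpow_add_sum_properDivisors (x : ℂ) (n : ℕ) :
    kappa x n = (n : ℂ) ^ x + ∑ d ∈ n.properDivisors, kappa x d := by
  rw [kappa, sum_attach]

section DirichletInverse

variable {R : Type*} [CommRing R]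

theorem mul_zeta_eq_add_self_sub_of_eq_add_sum_properDivisors {f g : ArithmeticFunction R}
    (h : ∀ n ≠ 0, f n = g n + ∑ d ∈ n.properDivisors, f d) : f * ζ = f + f - g := by
  ext n
  rcases eq_or_ne n 0 with rfl | hn
  · simp
  simp only [coe_mul_zeta_apply, sub_eq_add_neg, ArithmeticFunction.add_apply,
    ArithmeticFunction.neg_apply]
  rw [← Nat.cons_self_properDivisors hn, sum_cons, h n hn]
  ring

theorem mul_moebius_add_moebius_sub_one_of_eq_add_sum_properDivisors {f g : ArithmeticFunction R}
    (h : ∀ n ≠ 0, f n = g n + ∑ d ∈ n.properDivisors, f d) :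
    f * ((μ : ArithmeticFunction R) + μ - 1) = g * μ := by
  have hμ := congrArg (· * (μ : ArithmeticFunction R))
    (mul_zeta_eq_add_self_sub_of_eq_add_sum_properDivisors h)
  simp only [mul_assoc, coe_zeta_mul_coe_moebius, mul_one, sub_mul, add_mul] at hμ
  linear_combination -hμ

end DirichletInverse

noncomputable def kappaZero : ArithmeticFunction ℂ :=
  ⟨fun n => if n = 0 then 0 else kappa 0 n, if_pos rfl⟩

theorem kappaZero_apply {n : ℕ} (hn : n ≠ 0) : kappaZero n = kappa 0 n := if_neg hn

theorem kappaZero_eq_zeta_add_sum_properDivisors {n : ℕ} (hn : n ≠ 0) :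
    kappaZero n = (ζ : ArithmeticFunction ℂ) n + ∑ d ∈ n.properDivisors, kappaZero d := by
  rw [kappaZero_apply hn, kappa_eq_cpow_add_sum_properDivisors, natCoe_apply, zeta_apply_ne hn,
    Complex.cpow_zero, Nat.cast_one]
  congr 1
  exact sum_congr rfl fun d hd => (kappaZero_apply (Nat.pos_of_mem_properDivisors hd).ne').symm

theorem kappaZero_mul_moebius_add_moebius_sub_one :
    kappaZero * ((μ : ArithmeticFunction ℂ) + μ - 1) = 1 := by
  rw [mul_moebius_add_moebius_sub_one_of_eq_add_sum_properDivisors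
    (fun _ hn => kappaZero_eq_zeta_add_sum_properDivisors hn), coe_zeta_mul_coe_moebius]

theorem stmt6_general (n : ℕ) :
    ∑ d ∈ n.divisors, kappa 0 d *
        (2 * (ArithmeticFunction.moebius (n / d) : ℂ) - (if n / d = 1 then 1 else 0)) =
      (if n = 1 then 1 else 0) := by
  have h := congrArg (· n) kappaZero_mul_moebius_add_moebius_sub_one
  simp only [mul_apply, one_apply] at h
  rw [← h, ← Nat.sum_divisorsAntidiagonal (fun d e => kappa 0 d * _)]
  refine sum_congr rfl fun x hx => ?_
  obtain ⟨rfl, hn⟩ := Nat.mem_divisorsAntidiagonal.mp hx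
  have hd : x.1 ≠ 0 := left_ne_zero_of_mul hn
  rw [kappaZero_apply hd, Nat.mul_div_cancel_left _ (Nat.pos_of_ne_zero hd)]
  simp only [sub_eq_add_neg, ArithmeticFunction.add_apply, ArithmeticFunction.neg_apply, one_apply,
    intCoe_apply]
  ring

theorem stmt6 (n : ℕ) (hn : 1 ≤ n) :
    ∑ d ∈ n.divisors, kappa 0 d *
        (2 * (ArithmeticFunction.moebius (n / d) : ℂ) - (if n / d = 1 then 1 else 0)) =
      (if n = 1 then 1 else 0) :=
  stmt6_general n
end

section
/- For all n ≥ 1, K(n) = Σ_{d|n} μ(d)·κ_0(n/d), i.e., K = μ * κ_0. -/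
/-!
Splitting off the term `d = n`, the defining recursion of `K` gives `∑_{d ∣ n} K(d) = 2 K(n) - ε(n)`,
and the recursion of `κ₀` (whose leading term is the constant `n ^ 0 = 1`) is solved by the same
expression `2 K - ε`. Hence `1 * K = κ₀` as arithmetic functions, and Möbius inversion gives
`K = μ * κ₀`.
-/

open Finset

lemma kappa_zero_eq (n : ℕ) : kappa 0 n = 1 + ∑ d ∈ n.properDivisors, kappa 0 d := by
  rw [kappa, Complex.cpow_zero, sum_attach n.properDivisors (kappa 0)]

lemma Kfac_eq (n : ℕ) :
    Kfac n = (if n = 1 then 1 else 0) + ∑ d ∈ n.properDivisors, Kfac d := by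
  rw [Kfac, sum_attach n.properDivisors Kfac]

lemma Kfac_eq_sum_properDivisors {n : ℕ} (hn : n ≠ 1) :
    Kfac n = ∑ d ∈ n.properDivisors, Kfac d := by
  rw [Kfac_eq, if_neg hn, zero_add]

lemma sum_properDivisors_ite_eq_one {n : ℕ} (hn : 1 < n) :
    ∑ d ∈ n.properDivisors, (if d = 1 then (1 : ℂ) else 0) = 1 := by
  rw [sum_ite_eq', if_pos (Nat.one_mem_properDivisors_iff_one_lt.mpr hn)]

lemma kappa_zero_add_ite_eq_two_mul_Kfac {n : ℕ} (hn : 0 < n) :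
    kappa 0 n + (if n = 1 then 1 else 0) = 2 * (Kfac n : ℂ) := by
  induction n using Nat.strong_induction_on with
  | _ n ih =>
    obtain rfl | hn1 := (Nat.one_le_iff_ne_zero.mpr hn.ne').eq_or_lt
    · rw [kappa_zero_eq, Kfac_eq]
      norm_num
    have hκ : ∀ d ∈ n.properDivisors,
        kappa 0 d = 2 * (Kfac d : ℂ) - (if d = 1 then 1 else 0) := fun d hd =>
      eq_sub_of_add_eq (ih d (Nat.mem_properDivisors.mp hd).2 (Nat.pos_of_mem_properDivisors hd))
    rw [kappa_zero_eq, sum_congr rfl hκ, sum_sub_distrib, sum_properDivisors_ite_eq_one hn1,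
      ← mul_sum, if_neg hn1.ne', Kfac_eq_sum_properDivisors hn1.ne']
    push_cast
    ring

lemma sum_divisors_Kfac {n : ℕ} (hn : 0 < n) :
    ∑ d ∈ n.divisors, (Kfac d : ℂ) = kappa 0 n := by
  have hK : (Kfac n : ℂ) = (if n = 1 then 1 else 0) + ∑ d ∈ n.properDivisors, (Kfac d : ℂ) := by
    rw [Kfac_eq]
    push_cast
    rfl
  rw [← Nat.cons_self_properDivisors hn.ne', sum_cons]
  linear_combination -hK - kappa_zero_add_ite_eq_two_mul_Kfac hn

theorem stmt14 (n : ℕ) (hn : 1 ≤ n) :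
    (Kfac n : ℂ) = ∑ d ∈ n.divisors, (ArithmeticFunction.moebius d : ℂ) * kappa 0 (n / d) := by
  rw [← Nat.sum_divisorsAntidiagonal (fun d e => (ArithmeticFunction.moebius d : ℂ) * kappa 0 e)]
  exact ((ArithmeticFunction.sum_eq_iff_sum_mul_moebius_eq (f := fun d => (Kfac d : ℂ))
    (g := kappa 0)).mp (fun _ hm => sum_divisors_Kfac hm) n hn).symm
end
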